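/- Let x, y ∈ ℝ³ be row vectors, t ∈ ℝ with t ≠ 0, B ∈ M₃(ℝ), and κ ∈ M₄(ℝ). If w̌⁻¹·n(x) = m(t,B)·n(y)·diag(1,κ) (where diag(1,κ) ∈ M₅(ℝ) is the block-diagonal matrix with blocks 1 and κ), then t·(1 + ‖x‖²) = 1, i.e. t = (1 + ‖x‖²)⁻¹. (This computation, extracting the Iwasawa A-component, is the key step in the proof of Lemma 'so14' of the paper: it yields φ^{(λ)}(w̌⁻¹n(x)) = (1+‖x‖²)^{-(λ+3/2)}.) -/
import Mathlib


open Matrix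

/-- The unipotent matrix `n(x) ∈ M₅(ℝ)` attached to a row vector `x ∈ ℝ³`. -/
noncomputable def nmat (x : Fin 3 → ℝ) : Matrix (Fin 5) (Fin 5) ℝ :=
  !![1 + (x 0 ^ 2 + x 1 ^ 2 + x 2 ^ 2) / 2, x 0, x 1, x 2, -((x 0 ^ 2 + x 1 ^ 2 + x 2 ^ 2) / 2);
     x 0, 1, 0, 0, -(x 0);
     x 1, 0, 1, 0, -(x 1);
     x 2, 0, 0, 1, -(x 2);
     (x 0 ^ 2 + x 1 ^ 2 + x 2 ^ 2) / 2, x 0, x 1, x 2, 1 - (x 0 ^ 2 + x 1 ^ 2 + x 2 ^ 2) / 2]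

/-- The Levi element `m(t,B) ∈ M₅(ℝ)`. -/
noncomputable def mmat (t : ℝ) (B : Matrix (Fin 3) (Fin 3) ℝ) : Matrix (Fin 5) (Fin 5) ℝ :=
  !![(t + t⁻¹) / 2, 0, 0, 0, (t - t⁻¹) / 2;
     0, B 0 0, B 0 1, B 0 2, 0;
     0, B 1 0, B 1 1, B 1 2, 0;
     0, B 2 0, B 2 1, B 2 2, 0;
     (t - t⁻¹) / 2, 0, 0, 0, (t + t⁻¹) / 2]

/-- The Weyl representative `w̌ = diag(1,−1,−1,−1,−1)`. -/
noncomputable def wcheck : Matrix (Fin 5) (Fin 5) ℝ := Matrix.diagonal ![1, -1, -1, -1, -1]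

/-- The block-diagonal matrix `diag(1,κ) ∈ M₅(ℝ)` for `κ ∈ M₄(ℝ)`. -/
noncomputable def diagOneK (κ : Matrix (Fin 4) (Fin 4) ℝ) : Matrix (Fin 5) (Fin 5) ℝ :=
  !![1, 0, 0, 0, 0;
     0, κ 0 0, κ 0 1, κ 0 2, κ 0 3;
     0, κ 1 0, κ 1 1, κ 1 2, κ 1 3;
     0, κ 2 0, κ 2 1, κ 2 2, κ 2 3;
     0, κ 3 0, κ 3 1, κ 3 2, κ 3 3]

/-- If `w̌⁻¹ n(x) = m(t,B) n(y) diag(1,κ)`, then `t = (1+‖x‖²)⁻¹`. -/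
theorem stmt7 (x y : Fin 3 → ℝ) (t : ℝ) (ht : t ≠ 0) (B : Matrix (Fin 3) (Fin 3) ℝ)
    (κ : Matrix (Fin 4) (Fin 4) ℝ)
    (h : wcheck⁻¹ * nmat x = mmat t B * nmat y * diagOneK κ) :
    t = (1 + (x 0 ^ 2 + x 1 ^ 2 + x 2 ^ 2))⁻¹ := by

  have hw : wcheck⁻¹ = wcheck := by
    apply Matrix.inv_eq_right_inv
    ext i j
    fin_cases i <;> fin_cases j <;>
      simp [wcheck, Matrix.mul_apply, Fin.sum_univ_five, Matrix.diagonal, Matrix.one_apply]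
  rw [hw] at h
  have h00 := congrFun (congrFun h 0) 0
  have h40 := congrFun (congrFun h 4) 0
  simp [wcheck, nmat, mmat, diagOneK, Matrix.mul_apply, Fin.sum_univ_five,
    Matrix.diagonal, Matrix.vecHead, Matrix.vecTail] at h00 h40
  have key : t⁻¹ = 1 + (x 0 ^ 2 + x 1 ^ 2 + x 2 ^ 2) := by
    have := sub_eq_sub_iff_sub_eq_sub.mp (congrArg₂ Sub.sub h00 h40)
    nlinarith [this]
  rw [← key]
  rw [inv_inv]
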